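/- arXiv:2002.02405 — 3 statements merged into one kernel-verified Lean document; each statement's English description precedes it below -/
import Mathlib

section
/- Equivalence of SGD with momentum and its SG-MCMC reparameterization: Let g : R^d -> R^d be any function (the minibatch mean gradient map), let n > 0, ell > 0 be reals and beta in [0,1). Set h := sqrt(ell / n) and gamma := (1 - beta) * sqrt(n / ell). Given theta_0 in R^d, define two pairs of sequences: (SGD) m_0 = 0, m_t = beta * m_{t-1} - ell * g(theta_{t-1}), theta_t = theta_{t-1} + m_t; and (reparameterized) mtilde_0 = 0, mtilde_t = (1 - gamma * h) * mtilde_{t-1} - h * n * g(thetatilde_{t-1}), thetatilde_t = thetatilde_{t-1} + h * mtilde_t, with thetatilde_0 = theta_0. Then for all t >= 0, thetatilde_t = theta_t and mtilde_t = sqrt(n / ell) * m_t. -/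
open Real

/-- Equivalence of SGD with momentum and its SG-MCMC (symplectic Euler, zero temperature)
reparameterization: the parameter trajectories coincide and the momenta agree up to the
scaling `√(n/ℓ)`. -/
theorem sgd_eq_sgmcmc_reparameterization
    {d : ℕ} (g : (Fin d → ℝ) → (Fin d → ℝ))
    (n ℓ : ℝ) (hn : 0 < n) (hℓ : 0 < ℓ)
    (β : ℝ) (hβ0 : 0 ≤ β) (hβ1 : β < 1)
    (h γ : ℝ)
    (hh : h = Real.sqrt (ℓ / n))
    (hγ : γ = (1 - β) * Real.sqrt (n / ℓ))
    (θ m θt mt : ℕ → (Fin d → ℝ))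
    (hm0 : m 0 = 0)
    (hmrec : ∀ t : ℕ, m (t + 1) = β • m t - ℓ • g (θ t))
    (hθrec : ∀ t : ℕ, θ (t + 1) = θ t + m (t + 1))
    (hmt0 : mt 0 = 0)
    (hθt0 : θt 0 = θ 0)
    (hmtrec : ∀ t : ℕ, mt (t + 1) = (1 - γ * h) • mt t - (h * n) • g (θt t))
    (hθtrec : ∀ t : ℕ, θt (t + 1) = θt t + h • mt (t + 1)) :
    ∀ t : ℕ, θt t = θ t ∧ mt t = Real.sqrt (n / ℓ) • m t := by
  set s := Real.sqrt (n / ℓ) with hs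
  have hhpos : 0 < h := by
    rw [hh]; exact Real.sqrt_pos.2 (by positivity)
  have hspos : 0 < s := by
    rw [hs]; exact Real.sqrt_pos.2 (by positivity)
  have hhs : h * s = 1 := by
    rw [hh, hs, ← Real.sqrt_mul (by positivity)]
    rw [show ℓ / n * (n / ℓ) = 1 by field_simp]
    exact Real.sqrt_one
  have hsq : h * h = ℓ / n := by
    rw [hh, ← Real.sqrt_mul (by positivity), Real.sqrt_mul_self (by positivity)]
  have hhn : h * n = s * ℓ := by
    have : h * (h * n) = h * (s * ℓ) := by
      rw [show h * (s * ℓ) = (h * s) * ℓ by ring, hhs]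
      rw [show h * (h * n) = (h * h) * n by ring, hsq]
      field_simp
    exact mul_left_cancel₀ (ne_of_gt hhpos) this
  have hγh : 1 - γ * h = β := by
    rw [hγ]
    have : (1 - β) * s * h = 1 - β := by
      rw [mul_assoc, mul_comm s h, hhs, mul_one]
    linarith [this]
  intro t
  induction t with
  | zero => exact ⟨hθt0, by rw [hmt0, hm0, smul_zero]⟩
  | succ t ih =>
    obtain ⟨ihθ, ihm⟩ := ih
    have hmnew : mt (t + 1) = s • m (t + 1) := by
      rw [hmtrec, hmrec, hγh, ihm, ihθ, hhn, smul_sub, smul_smul, smul_smul,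
        smul_smul]
      ring_nf
    refine ⟨?_, hmnew⟩
    rw [hθtrec, hθrec, ihθ, hmnew, smul_smul, hhs, one_smul]
end

section
/- Constructing temperature observables (Proposition 1): Let T > 0, let H : R^N -> R be differentiable with Z := integral over R^N of exp( -H(x) / T ) dx finite and positive, and let rho denote the Gibbs probability density rho(x) = exp( -H(x) / T ) / Z. Let B : R^N -> R^N be a differentiable vector field such that: (a) the vector field x |-> B(x) * exp( -H(x) / T ) has Lebesgue-integrable divergence whose integral over R^N is zero; (b) 0 < integral <B(x), grad H(x)> rho(x) dx < infinity; and (c) 0 < integral div B(x) rho(x) dx < infinity. Then T = ( integral <B(x), grad H(x)> rho(x) dx ) / ( integral div B(x) rho(x) dx ). -/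
open MeasureTheory Real

/-! The Gibbs weight `w = exp (-H / T)` satisfies `∇w = -(w / T) ∇H`, so the product rule gives
`div (w B) = w div B - (w / T) ⟨B, ∇H⟩`. Integrating, the left side
vanishes by hypothesis, hence `E_ρ[div B] = E_ρ[⟨B, ∇H⟩] / T`, and dividing (with
`E_ρ[⟨B, ∇H⟩] ≠ 0`) recovers `T`. -/

theorem fderiv_exp_neg_div_apply {E : Type*} [NormedAddCommGroup E] [NormedSpace ℝ E]
    {H : E → ℝ} {x : E} (hH : DifferentiableAt ℝ H x) (T : ℝ) (v : E) :
    fderiv ℝ (fun y => exp (-H y / T)) x v = -(exp (-H x / T) / T) * fderiv ℝ H x v := by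
  simp only [div_eq_mul_inv]
  rw [(hH.hasFDerivAt.fun_neg.mul_const T⁻¹).exp.fderiv]
  simp only [smul_apply, smul_eq_mul, neg_apply]
  ring

section Gibbs

variable {ι : Type*} [Fintype ι] [DecidableEq ι] {H : (ι → ℝ) → ℝ} {B : (ι → ℝ) → ι → ℝ}

noncomputable def divergence (B : (ι → ℝ) → ι → ℝ) (x : ι → ℝ) : ℝ :=
  ∑ j, fderiv ℝ (fun y => B y j) x (Pi.single j 1)

theorem divergence_smul {f : (ι → ℝ) → ℝ} {x : ι → ℝ}
    (hf : DifferentiableAt ℝ f x) (hB : DifferentiableAt ℝ B x) :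
    divergence (fun y => f y • B y) x =
      f x * divergence B x + ∑ j, B x j * fderiv ℝ f x (Pi.single j 1) := by
  simp only [divergence, Pi.smul_apply, smul_eq_mul,
    fderiv_fun_mul hf (differentiableAt_pi.1 hB _), Finset.mul_sum, ← Finset.sum_add_distrib,
    add_apply, smul_apply]

theorem inv_mul_divergence_gibbs_smul {x : ι → ℝ} (hH : DifferentiableAt ℝ H x)
    (hB : DifferentiableAt ℝ B x) (T Z : ℝ) :
    Z⁻¹ * divergence (fun y => exp (-H y / T) • B y) x =
      divergence B x * (exp (-H x / T) / Z) -
        T⁻¹ * ((∑ j, B x j * fderiv ℝ H x (Pi.single j 1)) * (exp (-H x / T) / Z)) := by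
  rw [divergence_smul (by fun_prop) hB]
  simp_rw [fderiv_exp_neg_div_apply hH, mul_left_comm (B x _), ← Finset.mul_sum]
  ring

theorem integral_divergence_mul_gibbs {μ : Measure (ι → ℝ)} (hH : Differentiable ℝ H)
    (hB : Differentiable ℝ B) {T Z : ℝ}
    (hdiv : ∫ x, divergence (fun y => exp (-H y / T) • B y) x ∂μ = 0)
    (hdivB : Integrable (fun x => divergence B x * (exp (-H x / T) / Z)) μ)
    (hgrad : Integrable
      (fun x => (∑ j, B x j * fderiv ℝ H x (Pi.single j 1)) * (exp (-H x / T) / Z)) μ) :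
    ∫ x, divergence B x * (exp (-H x / T) / Z) ∂μ =
      T⁻¹ * ∫ x, (∑ j, B x j * fderiv ℝ H x (Pi.single j 1)) * (exp (-H x / T) / Z) ∂μ := by
  have h := congrArg (Z⁻¹ * ·) hdiv
  simp only [mul_zero, ← integral_const_mul, inv_mul_divergence_gibbs_smul (hH _) (hB _)] at h
  rwa [integral_sub hdivB (hgrad.const_mul _), integral_const_mul, sub_eq_zero] at h

end Gibbs

theorem temperature_observable_general
    {N : ℕ}
    (T : ℝ)
    (H : (Fin N → ℝ) → ℝ) (hH : Differentiable ℝ H)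
    (Z : ℝ)
    (B : (Fin N → ℝ) → (Fin N → ℝ)) (hB : Differentiable ℝ B)
    -- (a) the vector field `x ↦ B(x) exp(-H(x)/T)` has integrable divergence with zero total integral
    (hdivzero : (∫ x : Fin N → ℝ,
      ∑ j, fderiv ℝ (fun y => Real.exp (-H y / T) * B y j) x (Pi.single j 1)) = 0)
    -- (b) `0 < ∫ ⟨B, ∇H⟩ ρ < ∞`
    (hBgradint : Integrable (fun x : Fin N → ℝ =>
      (∑ j, B x j * fderiv ℝ H x (Pi.single j 1)) * (Real.exp (-H x / T) / Z)))
    (hBgradpos : 0 < ∫ x : Fin N → ℝ,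
      (∑ j, B x j * fderiv ℝ H x (Pi.single j 1)) * (Real.exp (-H x / T) / Z))
    -- (c) `0 < ∫ (div B) ρ < ∞`
    (hdivBint : Integrable (fun x : Fin N → ℝ =>
      (∑ j, fderiv ℝ (fun y => B y j) x (Pi.single j 1)) * (Real.exp (-H x / T) / Z))) :
    T = (∫ x : Fin N → ℝ,
          (∑ j, B x j * fderiv ℝ H x (Pi.single j 1)) * (Real.exp (-H x / T) / Z)) /
        (∫ x : Fin N → ℝ,
          (∑ j, fderiv ℝ (fun y => B y j) x (Pi.single j 1)) * (Real.exp (-H x / T) / Z)) := by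
  have key := integral_divergence_mul_gibbs hH hB hdivzero hdivBint hBgradint
  unfold divergence at key
  rw [key, div_mul_cancel_right₀ hBgradpos.ne', inv_inv]

/-- Constructing temperature observables (Proposition 1): for the Gibbs density
`ρ(x) = exp(-H(x)/T) / Z` and a vector field `B` whose product with the Gibbs weight has
vanishing total divergence, the temperature is recovered as the ratio
`T = E_ρ[⟨B, ∇H⟩] / E_ρ[div B]`.  Here `⟨B(x), ∇H(x)⟩ = ∑ⱼ Bⱼ(x) ∂ⱼH(x)` and
`div B = ∑ⱼ ∂ⱼBⱼ`. -/
theorem temperature_observable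
    {N : ℕ}
    (T : ℝ) (hT : 0 < T)
    (H : (Fin N → ℝ) → ℝ) (hH : Differentiable ℝ H)
    (Z : ℝ) (hZdef : Z = ∫ x : Fin N → ℝ, Real.exp (-H x / T))
    (hZint : Integrable (fun x : Fin N → ℝ => Real.exp (-H x / T)))
    (hZpos : 0 < Z)
    (B : (Fin N → ℝ) → (Fin N → ℝ)) (hB : Differentiable ℝ B)
    -- (a) the vector field `x ↦ B(x) exp(-H(x)/T)` has integrable divergence with zero total integral
    (hdivint : Integrable (fun x : Fin N → ℝ =>
      ∑ j, fderiv ℝ (fun y => Real.exp (-H y / T) * B y j) x (Pi.single j 1)))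
    (hdivzero : (∫ x : Fin N → ℝ,
      ∑ j, fderiv ℝ (fun y => Real.exp (-H y / T) * B y j) x (Pi.single j 1)) = 0)
    -- (b) `0 < ∫ ⟨B, ∇H⟩ ρ < ∞`
    (hBgradint : Integrable (fun x : Fin N → ℝ =>
      (∑ j, B x j * fderiv ℝ H x (Pi.single j 1)) * (Real.exp (-H x / T) / Z)))
    (hBgradpos : 0 < ∫ x : Fin N → ℝ,
      (∑ j, B x j * fderiv ℝ H x (Pi.single j 1)) * (Real.exp (-H x / T) / Z))
    -- (c) `0 < ∫ (div B) ρ < ∞`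
    (hdivBint : Integrable (fun x : Fin N → ℝ =>
      (∑ j, fderiv ℝ (fun y => B y j) x (Pi.single j 1)) * (Real.exp (-H x / T) / Z)))
    (hdivBpos : 0 < ∫ x : Fin N → ℝ,
      (∑ j, fderiv ℝ (fun y => B y j) x (Pi.single j 1)) * (Real.exp (-H x / T) / Z)) :
    T = (∫ x : Fin N → ℝ,
          (∑ j, B x j * fderiv ℝ H x (Pi.single j 1)) * (Real.exp (-H x / T) / Z)) /
        (∫ x : Fin N → ℝ,
          (∑ j, fderiv ℝ (fun y => B y j) x (Pi.single j 1)) * (Real.exp (-H x / T) / Z)) :=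
  temperature_observable_general T H hH Z B hB hdivzero hBgradint hBgradpos hdivBint
end

section
/- Pseudo-event construction realizing tempered classification likelihoods as a normalized observation model: Let K >= 1, T in (0, 1], and let p : {1,...,K} -> [0,1] satisfy sum_{k=1}^K p(k) = 1. Define ptilde(k) := p(k)^{1/T} for k in {1,...,K} and ptilde(emptyset) := 1 - sum_{k=1}^K p(k)^{1/T}. Then: (i) x |-> x^{1/T} is monotone on [0,1] and p(k)^{1/T} <= p(k) for each k, hence sum_{k=1}^K ptilde(k) <= 1 and ptilde(emptyset) >= 0; (ii) ptilde is a probability distribution on the K+1 events {1,...,K, emptyset}, i.e. all values are in [0,1] and sum to 1; and (iii) for every k in {1,...,K} with p(k) > 0, log ptilde(k) = (1/T) * log p(k). -/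
open Real

/-- Pseudo-event construction realizing tempered classification likelihoods as a normalized
observation model: for class probabilities `p` on `K` classes and `T ∈ (0,1]`, setting
`p̃(k) = p(k)^{1/T}` and `p̃(∅) = 1 - ∑ₖ p(k)^{1/T}` yields (i) monotonicity of `x ↦ x^{1/T}`
on `[0,1]` and `p(k)^{1/T} ≤ p(k)`, hence `∑ₖ p̃(k) ≤ 1` and `p̃(∅) ≥ 0`; (ii) a probability
distribution on the `K+1` events; and (iii) `log p̃(k) = (1/T) log p(k)` whenever `p(k) > 0`. -/
theorem pseudo_event_tempered_likelihood
    {K : ℕ} (hK : 1 ≤ K)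
    (T : ℝ) (hT0 : 0 < T) (hT1 : T ≤ 1)
    (p : Fin K → ℝ) (hp0 : ∀ k, 0 ≤ p k) (hp1 : ∀ k, p k ≤ 1)
    (hpsum : ∑ k, p k = 1)
    (ptilde : Option (Fin K) → ℝ)
    (hsome : ∀ k : Fin K, ptilde (some k) = p k ^ (1 / T))
    (hnone : ptilde none = 1 - ∑ k, p k ^ (1 / T)) :
    -- (i)
    (MonotoneOn (fun x : ℝ => x ^ (1 / T)) (Set.Icc (0 : ℝ) 1) ∧
      (∀ k, p k ^ (1 / T) ≤ p k) ∧
      (∑ k, ptilde (some k)) ≤ 1 ∧ 0 ≤ ptilde none) ∧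
    -- (ii)
    ((∀ y : Option (Fin K), 0 ≤ ptilde y ∧ ptilde y ≤ 1) ∧
      ∑ y : Option (Fin K), ptilde y = 1) ∧
    -- (iii)
    (∀ k : Fin K, 0 < p k → Real.log (ptilde (some k)) = (1 / T) * Real.log (p k)) := by
  have h1T : 1 ≤ 1 / T := one_le_one_div hT0 hT1
  have h0T : 0 ≤ 1 / T := by positivity
  -- key: p k ^ (1/T) ≤ p k
  have hkey : ∀ k, p k ^ (1 / T) ≤ p k := by
    intro k
    rcases eq_or_lt_of_le (hp0 k) with h | h
    · rw [← h, Real.zero_rpow (by positivity)]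
    · calc p k ^ (1 / T) ≤ p k ^ (1 : ℝ) :=
            Real.rpow_le_rpow_of_exponent_ge h (hp1 k) h1T
        _ = p k := Real.rpow_one _
  have hnn : ∀ k, 0 ≤ p k ^ (1 / T) := fun k => Real.rpow_nonneg (hp0 k) _
  have hsumle : (∑ k, p k ^ (1 / T)) ≤ 1 := by
    calc (∑ k, p k ^ (1 / T)) ≤ ∑ k, p k := Finset.sum_le_sum fun k _ => hkey k
      _ = 1 := hpsum
  have hsum' : (∑ k, ptilde (some k)) = ∑ k, p k ^ (1 / T) :=
    Finset.sum_congr rfl fun k _ => hsome k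
  have hmono : MonotoneOn (fun x : ℝ => x ^ (1 / T)) (Set.Icc (0 : ℝ) 1) := by
    intro x hx y _ hxy
    exact Real.rpow_le_rpow hx.1 hxy h0T
  have hnone0 : 0 ≤ ptilde none := by rw [hnone]; linarith
  have hnonneg : ∀ y : Option (Fin K), 0 ≤ ptilde y := by
    rintro (_ | k)
    · exact hnone0
    · rw [hsome k]; exact hnn k
  have hsingle : ∀ k : Fin K, p k ^ (1 / T) ≤ ∑ j, p j ^ (1 / T) := fun k =>
    Finset.single_le_sum (fun j _ => hnn j) (Finset.mem_univ k)
  have htotal : ∑ y : Option (Fin K), ptilde y = 1 := by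
    rw [Fintype.sum_option, hnone, hsum']; ring
  refine ⟨⟨hmono, hkey, by rw [hsum']; exact hsumle, hnone0⟩,
    ⟨fun y => ⟨hnonneg y, ?_⟩, htotal⟩, fun k hk => by
      rw [hsome k, Real.log_rpow hk]⟩
  rcases y with _ | k
  · rw [hnone]
    have : 0 ≤ ∑ j, p j ^ (1 / T) := Finset.sum_nonneg fun j _ => hnn j
    linarith
  · rw [hsome k]
    calc p k ^ (1 / T) ≤ ∑ j, p j ^ (1 / T) := hsingle k
      _ ≤ 1 := hsumle
end
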